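/- For every n, the complete graph K_n is a 2-PCC graph; that is, K_n can be drawn as a simple topological graph in which for every pair of crossing edges there is a path of at most 2 crossing-free edges connecting an endpoint of one edge with an endpoint of the other. -/

import Mathlib

open Set

/-- A topological graph: a graph (no loops or parallel edges) drawn in the plane with
vertices as distinct points and edges as Jordan arcs connecting the corresponding points,
not containing any other vertex in their interior, and such that every two edges intersect
in finitely many points. -/
structure TopoGraph (V : Type) (E : Type) where
  /-- the position of each vertex in the plane -/
  pos : V → ℝ × ℝ
  pos_inj : Function.Injective pos
  /-- the two endpoints of each edge -/
  src : E → V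
  tgt : E → V
  /-- no loops -/
  src_ne_tgt : ∀ e, src e ≠ tgt e
  /-- no parallel edges -/
  no_parallel : ∀ e f : E, ({src e, tgt e} : Set V) = {src f, tgt f} → e = f
  /-- each edge is drawn as a (Jordan) arc -/
  arc : E → C(unitInterval, ℝ × ℝ)
  arc_src : ∀ e, arc e 0 = pos (src e)
  arc_tgt : ∀ e, arc e 1 = pos (tgt e)
  arc_inj : ∀ e, Function.Injective (arc e)
  /-- an edge does not contain any vertex as an interior point -/
  vertex_not_interior : ∀ (e : E) (v : V) (t : unitInterval), arc e t = pos v → t = 0 ∨ t = 1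
  /-- every pair of edges has a finite number of intersection points -/
  finite_intersections : ∀ e f : E, e ≠ f → (Set.range (arc e) ∩ Set.range (arc f)).Finite

namespace TopoGraph

variable {V E : Type} (G : TopoGraph V E)

/-- The endpoints of an edge. -/
def ends (e : E) : Set V := {G.src e, G.tgt e}

/-- Two edges cross if they intersect at a point which is not a common endpoint
(equivalently, not a vertex). -/
def Crosses (e f : E) : Prop :=
  e ≠ f ∧ ∃ p : ℝ × ℝ, p ∈ Set.range (G.arc e) ∧ p ∈ Set.range (G.arc f) ∧ ∀ v : V, p ≠ G.pos v

/-- An edge is crossing-free if no other edge crosses it. -/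
def CrossingFree (e : E) : Prop := ∀ f : E, ¬ G.Crosses e f

/-- Two edges are independent if they do not share a vertex. -/
def Independent (e f : E) : Prop := Disjoint (G.ends e) (G.ends f)

/-- Two (crossing) edges are planarly connected if there is a crossing-free edge
connecting an endpoint of one with an endpoint of the other. -/
def PlanarlyConnected (e f : E) : Prop :=
  ∃ g : E, G.CrossingFree g ∧
    ((G.src g ∈ G.ends e ∧ G.tgt g ∈ G.ends f) ∨ (G.src g ∈ G.ends f ∧ G.tgt g ∈ G.ends e))

/-- A topological graph is simple if every pair of its edges intersects at most once. -/
def Simple : Prop :=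
  ∀ e f : E, e ≠ f → (Set.range (G.arc e) ∩ Set.range (G.arc f)).Subsingleton

/-- A PCC topological graph: every pair of crossing edges is independent and
planarly connected. -/
def PCC : Prop := ∀ e f : E, G.Crosses e f → G.Independent e f ∧ G.PlanarlyConnected e f

end TopoGraph
namespace TopoGraph

variable {V E : Type} (G : TopoGraph V E)

/-- The abstract (simple) graph underlying a topological graph. -/
def toSimpleGraph : SimpleGraph V where
  Adj u v := u ≠ v ∧ ∃ e : E, ({G.src e, G.tgt e} : Set V) = {u, v}
  symm := ⟨by
    rintro u v ⟨h, e, he⟩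
    exact ⟨h.symm, e, he.trans (Set.pair_comm u v)⟩⟩
  loopless := ⟨fun u h => h.1 rfl⟩

/-- The plane graph `G'` formed by the crossing-free edges of `G`. -/
def planarSubgraph : SimpleGraph V where
  Adj u v := u ≠ v ∧ ∃ e : E, G.CrossingFree e ∧ ({G.src e, G.tgt e} : Set V) = {u, v}
  symm := ⟨by
    rintro u v ⟨h, e, hf, he⟩
    exact ⟨h.symm, e, hf, he.trans (Set.pair_comm u v)⟩⟩
  loopless := ⟨fun u h => h.1 rfl⟩

/-- The connected component (of the plane graph of crossing-free edges) of a vertex. -/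
def compOf (v : V) : G.planarSubgraph.ConnectedComponent :=
  G.planarSubgraph.connectedComponentMk v

/-- The abstract graph `H` on the connected components of `G'`, where two components are
adjacent iff there is a crossed edge of `G` between them. -/
def componentGraph : SimpleGraph G.planarSubgraph.ConnectedComponent where
  Adj c d := c ≠ d ∧ ∃ e : E, ¬ G.CrossingFree e ∧
    ((G.compOf (G.src e) = c ∧ G.compOf (G.tgt e) = d) ∨
     (G.compOf (G.src e) = d ∧ G.compOf (G.tgt e) = c))
  symm := ⟨by
    rintro c d ⟨h, e, he, hcd⟩
    exact ⟨h.symm, e, he, hcd.symm⟩⟩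
  loopless := ⟨fun c h => h.1 rfl⟩

/-- `E''_{c,d}`: the crossed edges with one endpoint in component `c` and the other
in component `d`. -/
def crossEdges (c d : G.planarSubgraph.ConnectedComponent) : Set E :=
  {e | ¬ G.CrossingFree e ∧
    ((G.compOf (G.src e) = c ∧ G.compOf (G.tgt e) = d) ∨
     (G.compOf (G.src e) = d ∧ G.compOf (G.tgt e) = c))}

/-- `V_{c,d}`: the vertices of component `c` joined by a crossed edge to some vertex of
component `d`. -/
def crossNbrs (c d : G.planarSubgraph.ConnectedComponent) : Set V :=
  {v | G.compOf v = c ∧ ∃ e : E, ¬ G.CrossingFree e ∧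
    ((G.src e = v ∧ G.compOf (G.tgt e) = d) ∨ (G.tgt e = v ∧ G.compOf (G.src e) = d))}

/-- The interior of an arc: the arc without its two endpoints. -/
def arcInterior (e : E) : Set (ℝ × ℝ) :=
  G.arc e '' {t : unitInterval | t ≠ 0 ∧ t ≠ 1}

/-- The point set of the drawing of a subset of the vertices and a subset of the edges. -/
def drawingOf (W : Set V) (S : Set E) : Set (ℝ × ℝ) :=
  (G.pos '' W) ∪ ⋃ e ∈ S, Set.range (G.arc e)

/-- A face of the plane (sub)graph drawn with vertex set `W` and edge set `S`:
a connected component of the complement of the drawing. -/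
def IsFaceOf (W : Set V) (S : Set E) (F : Set (ℝ × ℝ)) : Prop :=
  ∃ x ∈ (G.drawingOf W S)ᶜ, F = connectedComponentIn (G.drawingOf W S)ᶜ x

/-- The vertex set of a connected component of the plane graph `G'`. -/
def compVerts (c : G.planarSubgraph.ConnectedComponent) : Set V :=
  {v | G.compOf v = c}

/-- The crossing-free edges with both endpoints in the component `c` of `G'`. -/
def compEdges (c : G.planarSubgraph.ConnectedComponent) : Set E :=
  {e | G.CrossingFree e ∧ G.compOf (G.src e) = c ∧ G.compOf (G.tgt e) = c}

/-- A face of the plane graph `G'_c` (the component `c` of the plane graph of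
crossing-free edges). -/
def IsCompFace (c : G.planarSubgraph.ConnectedComponent) (F : Set (ℝ × ℝ)) : Prop :=
  G.IsFaceOf (G.compVerts c) (G.compEdges c) F

/-- `E''(F)`: the crossed edges with both endpoints in component `c` that are drawn
inside the face `F`. -/
def faceCrossedEdges (c : G.planarSubgraph.ConnectedComponent) (F : Set (ℝ × ℝ)) : Set E :=
  {e | e ∈ G.crossEdges c c ∧ G.arcInterior e ⊆ F}

/-- The edges on the boundary of a face `F` of the component `c` of `G'`. -/
def BoundaryEdge (c : G.planarSubgraph.ConnectedComponent) (F : Set (ℝ × ℝ)) (e : E) : Prop :=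
  e ∈ G.compEdges c ∧ Set.range (G.arc e) ⊆ closure F

/-- `|F|`: the size of a face `F`, i.e. the length of the shortest closed walk
(in the plane graph of crossing-free edges) visiting every edge on the boundary of `F`. -/
noncomputable def faceSize (c : G.planarSubgraph.ConnectedComponent) (F : Set (ℝ × ℝ)) : ℕ :=
  sInf {n : ℕ | ∃ (u : V) (w : G.planarSubgraph.Walk u u), w.length = n ∧
    ∀ e : E, G.BoundaryEdge c F e → s(G.src e, G.tgt e) ∈ w.edges}

/-- A drawing is 1-plane if every edge is crossed at most once. -/
def OnePlane : Prop :=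
  ∀ e : E, {q : E × (ℝ × ℝ) | q.1 ≠ e ∧ q.2 ∈ Set.range (G.arc e) ∧
    q.2 ∈ Set.range (G.arc q.1) ∧ ∀ v : V, q.2 ≠ G.pos v}.Subsingleton

/-- The number of crossings in a drawing: the number of pairs consisting of an unordered
pair of edges together with a crossing point of the two edges. -/
noncomputable def numCrossings : ℕ :=
  Nat.card {q : Sym2 E × (ℝ × ℝ) // ∃ e f : E, q.1 = s(e, f) ∧ e ≠ f ∧
    q.2 ∈ Set.range (G.arc e) ∧ q.2 ∈ Set.range (G.arc f) ∧ ∀ v : V, q.2 ≠ G.pos v}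

/-- Two crossing edges are `k`-planarly connected if a path of at most `k` crossing-free
edges connects an endpoint of one with an endpoint of the other. -/
def KPlanarlyConnected (k : ℕ) (e f : E) : Prop :=
  ∃ (u v : V), u ∈ G.ends e ∧ v ∈ G.ends f ∧
    ∃ w : G.planarSubgraph.Walk u v, w.length ≤ k

end TopoGraph

/-- An abstract simple graph is 1-planar if it can be drawn as a topological graph in
which every edge is crossed at most once. -/
def IsOnePlanar {V : Type} (H : SimpleGraph V) : Prop :=
  ∃ (E : Type) (D : TopoGraph V E), D.toSimpleGraph = H ∧ D.OnePlane

/-- An abstract simple graph is planar if it can be drawn as a topological graph with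
no crossings. -/
def IsPlanarGraph {V : Type} (H : SimpleGraph V) : Prop :=
  ∃ (E : Type) (D : TopoGraph V E), D.toSimpleGraph = H ∧ ∀ e : E, D.CrossingFree e

/-! Vertex `i` of `K_n` is drawn at `(i, 0)` and each edge as a parabolic arc over the
segment between its endpoints: the edges at vertex `0` below the axis, all others above.
Two parabolas with the same leading coefficient meet in at most one point, and an arc
below the axis meets an arc above it only on the axis, so the drawing is simple and the star
at `0` is crossing-free; any two crossing edges are then joined through vertex `0`. -/

namespace TopoGraph

variable {V E : Type} {G : TopoGraph V E}

theorem Crosses.symm {e f : E} (h : G.Crosses e f) : G.Crosses f e :=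
  let ⟨hne, p, hpe, hpf, hp⟩ := h
  ⟨hne.symm, p, hpf, hpe, hp⟩

theorem planarSubgraph_adj_of_crossingFree {e : E} (he : G.CrossingFree e) :
    G.planarSubgraph.Adj (G.src e) (G.tgt e) :=
  ⟨G.src_ne_tgt e, e, he, rfl⟩

theorem kPlanarlyConnected_two_of_adj {e f : E} {u z v : V} (hu : u ∈ G.ends e)
    (hv : v ∈ G.ends f) (huz : G.planarSubgraph.Adj u z) (hzv : G.planarSubgraph.Adj z v) :
    G.KPlanarlyConnected 2 e f :=
  ⟨u, v, hu, hv, .cons huz (.cons hzv .nil), le_rfl⟩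

end TopoGraph

namespace ArcDiagram

variable {n : ℕ}

abbrev Edge (n : ℕ) := {p : Fin n × Fin n // p.1 < p.2}

def left (e : Edge n) : ℝ := (e.1.1 : ℕ)

def right (e : Edge n) : ℝ := (e.1.2 : ℕ)

def side (e : Edge n) : ℝ := if (e.1.1 : ℕ) = 0 then -1 else 1

def height (e : Edge n) (x : ℝ) : ℝ := side e * ((x - left e) * (right e - x))

def OnArc (e : Edge n) (p : ℝ × ℝ) : Prop :=
  p.1 ∈ Icc (left e) (right e) ∧ p.2 = height e p.1

theorem left_lt_right (e : Edge n) : left e < right e := by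
  unfold left right
  exact_mod_cast e.2

theorem side_ne_zero (e : Edge n) : side e ≠ 0 := by
  unfold side; split_ifs <;> norm_num

theorem left_eq_zero_iff (e : Edge n) : left e = 0 ↔ (e.1.1 : ℕ) = 0 := by
  simp [left]

theorem one_le_left_of_ne_zero {e : Edge n} (he : (e.1.1 : ℕ) ≠ 0) : 1 ≤ left e := by
  unfold left
  exact_mod_cast Nat.one_le_iff_ne_zero.mpr he

theorem onArc_left (e : Edge n) : OnArc e (left e, 0) :=
  ⟨⟨le_rfl, (left_lt_right e).le⟩, by simp [height]⟩

theorem OnArc.fst_eq_of_snd_eq_zero {e : Edge n} {p : ℝ × ℝ} (hp : OnArc e p)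
    (h0 : p.2 = 0) : p.1 = left e ∨ p.1 = right e := by
  have : (p.1 - left e) * (right e - p.1) = 0 := by
    simpa [h0, height, side_ne_zero e] using hp.2.symm
  rcases mul_eq_zero.mp this with h | h
  · exact .inl (by linarith)
  · exact .inr (by linarith)

theorem eq_of_add_eq_of_mul_eq {a b c d : ℝ} (hab : a < b) (hcd : c < d)
    (hs : a + b = c + d) (hp : a * b = c * d) : a = c ∧ b = d := by
  have : (a - c) * (a - d) = 0 := by linear_combination a * hs - hp
  rcases mul_eq_zero.mp this with h | h
  · constructor <;> linarith
  · linarith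

theorem edge_eq_of_left_add_right_eq {e f : Edge n} (hs : left e + right e = left f + right f)
    (hp : left e * right e = left f * right f) : e = f := by
  obtain ⟨hl, hr⟩ := eq_of_add_eq_of_mul_eq (left_lt_right e) (left_lt_right f) hs hp
  unfold left at hl
  unfold right at hr
  exact Subtype.ext (Prod.ext (Fin.ext (by exact_mod_cast hl)) (Fin.ext (by exact_mod_cast hr)))

theorem fst_eq_of_side_eq {e f : Edge n} (hef : e ≠ f) (hs : side e = side f) {p q : ℝ × ℝ}
    (hpe : OnArc e p) (hpf : OnArc f p) (hqe : OnArc e q) (hqf : OnArc f q) : p.1 = q.1 := by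
  have affine : ∀ {x : ℝ}, height e x = height f x →
      (left e + right e - left f - right f) * x = left e * right e - left f * right f := by
    intro x hx
    unfold height at hx
    rw [hs] at hx
    linear_combination (mul_left_cancel₀ (side_ne_zero f) hx)
  have hp := affine (hpe.2.symm.trans hpf.2)
  have hq := affine (hqe.2.symm.trans hqf.2)
  by_cases hc : left e + right e - left f - right f = 0
  · rw [hc, zero_mul] at hp
    exact absurd (edge_eq_of_left_add_right_eq (by linarith) (by linarith)) hef
  · exact mul_left_cancel₀ hc (hp.trans hq.symm)

theorem OnArc.side_mul_snd_nonneg {e : Edge n} {p : ℝ × ℝ} (hp : OnArc e p) :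
    0 ≤ side e * p.2 := by
  have hsq : side e * side e = 1 := by unfold side; split_ifs <;> norm_num
  rw [hp.2, height, ← mul_assoc, hsq, one_mul]
  exact mul_nonneg (by linarith [hp.1.1]) (by linarith [hp.1.2])

theorem eq_right_of_onArc_of_left_eq_zero {e f : Edge n} (he : (e.1.1 : ℕ) ≠ 0)
    (hf : (f.1.1 : ℕ) = 0) {p : ℝ × ℝ} (hpe : OnArc e p) (hpf : OnArc f p) :
    p = (right f, 0) := by
  have hp2 : p.2 = 0 := by
    have hpe' := hpe.side_mul_snd_nonneg
    have hpf' := hpf.side_mul_snd_nonneg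
    simp only [side, he, hf, if_true, if_false] at hpe' hpf'
    linarith
  have hleft : p.1 ≠ left f := by
    rw [(left_eq_zero_iff f).mpr hf]
    linarith [hpe.1.1, one_le_left_of_ne_zero he]
  exact Prod.ext ((hpf.fst_eq_of_snd_eq_zero hp2).resolve_left hleft) hp2

theorem onArc_inter_subsingleton {e f : Edge n} (hef : e ≠ f) :
    {p | OnArc e p ∧ OnArc f p}.Subsingleton := by
  rintro p ⟨hpe, hpf⟩ q ⟨hqe, hqf⟩
  by_cases hs : side e = side f
  · have h1 := fst_eq_of_side_eq hef hs hpe hpf hqe hqf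
    exact Prod.ext h1 (by rw [hpe.2, hqe.2, h1])
  · have : ((e.1.1 : ℕ) = 0 ∧ (f.1.1 : ℕ) ≠ 0) ∨
        ((e.1.1 : ℕ) ≠ 0 ∧ (f.1.1 : ℕ) = 0) := by
      unfold side at hs; split_ifs at hs <;> simp_all
    rcases this with ⟨he, hf⟩ | ⟨he, hf⟩
    · rw [eq_right_of_onArc_of_left_eq_zero hf he hpf hpe,
        eq_right_of_onArc_of_left_eq_zero hf he hqf hqe]
    · rw [eq_right_of_onArc_of_left_eq_zero he hf hpe hpf,
        eq_right_of_onArc_of_left_eq_zero he hf hqe hqf]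

theorem exists_eq_vertex_of_onArc_of_left_eq_zero {e f : Edge n} (hef : e ≠ f)
    (he : (e.1.1 : ℕ) = 0) {p : ℝ × ℝ} (hpe : OnArc e p) (hpf : OnArc f p) :
    ∃ v : Fin n, p = (((v : ℕ) : ℝ), 0) := by
  by_cases hf : (f.1.1 : ℕ) = 0
  · have hl : left e = left f := by rw [(left_eq_zero_iff e).mpr he, (left_eq_zero_iff f).mpr hf]
    have h1 := fst_eq_of_side_eq hef (by simp [side, he, hf]) hpe hpf (onArc_left e)
      (hl ▸ onArc_left f)
    refine ⟨e.1.1, Prod.ext h1 ?_⟩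
    rw [hpe.2, h1]
    simp [height]
  · exact ⟨e.1.2, eq_right_of_onArc_of_left_eq_zero hf he hpf hpe⟩

def arc (e : Edge n) : C(unitInterval, ℝ × ℝ) where
  toFun t := (left e + (right e - left e) * t, height e (left e + (right e - left e) * t))
  continuous_toFun := by unfold height; fun_prop

theorem onArc_arc (e : Edge n) (t : unitInterval) : OnArc e (arc e t) := by
  have := left_lt_right e
  refine ⟨⟨?_, ?_⟩, rfl⟩ <;> simp only [arc, ContinuousMap.coe_mk] <;>
    nlinarith [t.2.1, t.2.2]

theorem onArc_of_mem_range {e : Edge n} {p : ℝ × ℝ} (hp : p ∈ range (arc e)) :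
    OnArc e p := by
  obtain ⟨t, rfl⟩ := hp
  exact onArc_arc e t

theorem arc_fst_eq_left_iff (e : Edge n) (t : unitInterval) :
    (arc e t).1 = left e ↔ t = 0 := by
  have hw := (sub_pos.mpr (left_lt_right e)).ne'
  change left e + (right e - left e) * t = left e ↔ t = 0
  rw [add_eq_left, mul_eq_zero, or_iff_right hw, Icc.coe_eq_zero]

theorem arc_fst_eq_right_iff (e : Edge n) (t : unitInterval) :
    (arc e t).1 = right e ↔ t = 1 := by
  have hw := (sub_pos.mpr (left_lt_right e)).ne'
  change left e + (right e - left e) * t = right e ↔ t = 1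
  rw [← Icc.coe_eq_one]
  constructor
  · intro h
    exact mul_left_cancel₀ hw (by linarith : (right e - left e) * t = (right e - left e) * 1)
  · intro h
    rw [h]
    ring

theorem range_arc_inter_subsingleton {e f : Edge n} (hef : e ≠ f) :
    (range (arc e) ∩ range (arc f)).Subsingleton :=
  (onArc_inter_subsingleton hef).anti fun _ hp =>
    ⟨onArc_of_mem_range hp.1, onArc_of_mem_range hp.2⟩

noncomputable def drawing (n : ℕ) : TopoGraph (Fin n) (Edge n) where
  pos v := ((v : ℕ), 0)
  pos_inj u v h := by simpa [Fin.ext_iff] using congrArg Prod.fst h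
  src e := e.1.1
  tgt e := e.1.2
  src_ne_tgt e := e.2.ne
  no_parallel e f h := by
    rcases pair_eq_pair_iff.mp h with ⟨h1, h2⟩ | ⟨h1, h2⟩
    · exact Subtype.ext (Prod.ext h1 h2)
    · exact absurd (h1 ▸ h2 ▸ e.2) (asymm f.2)
  arc := arc
  arc_src e := by simp [arc, height, left]
  arc_tgt e := by simp [arc, height, right]
  arc_inj e s t h := by
    have := (sub_pos.mpr (left_lt_right e)).ne'
    simpa [arc, this, Subtype.ext_iff] using congrArg Prod.fst h
  vertex_not_interior e v t h := by
    rcases (onArc_arc e t).fst_eq_of_snd_eq_zero (congrArg Prod.snd h) with h' | h'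
    · exact .inl ((arc_fst_eq_left_iff e t).mp h')
    · exact .inr ((arc_fst_eq_right_iff e t).mp h')
  finite_intersections _ _ hef := (range_arc_inter_subsingleton hef).finite

theorem drawing_simple (n : ℕ) : (drawing n).Simple := fun _ _ => range_arc_inter_subsingleton

theorem drawing_toSimpleGraph (n : ℕ) : (drawing n).toSimpleGraph = ⊤ := by
  ext u v
  refine ⟨fun h => h.1, fun h => ⟨h, ?_⟩⟩
  rcases h.lt_or_gt with huv | hvu
  · exact ⟨⟨(u, v), huv⟩, rfl⟩
  · exact ⟨⟨(v, u), hvu⟩, pair_comm _ _⟩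

theorem drawing_crossingFree_of_src_eq_zero {e : Edge n} (he : (e.1.1 : ℕ) = 0) :
    (drawing n).CrossingFree e := by
  rintro f ⟨hef, p, hpe, hpf, hp⟩
  obtain ⟨v, rfl⟩ := exists_eq_vertex_of_onArc_of_left_eq_zero hef he
    (onArc_of_mem_range hpe) (onArc_of_mem_range hpf)
  exact hp v rfl

theorem src_ne_zero_of_crosses {e f : Edge n} (h : (drawing n).Crosses e f) :
    (e.1.1 : ℕ) ≠ 0 :=
  fun he => drawing_crossingFree_of_src_eq_zero he f h

theorem drawing_planarSubgraph_adj_zero {v : Fin n} (hv : (v : ℕ) ≠ 0) :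
    (drawing n).planarSubgraph.Adj ⟨0, v.pos⟩ v :=
  TopoGraph.planarSubgraph_adj_of_crossingFree
    (e := ⟨(⟨0, v.pos⟩, v), Nat.pos_of_ne_zero hv⟩)
    (drawing_crossingFree_of_src_eq_zero rfl)

end ArcDiagram

/-- For every `n`, the complete graph `K_n` can be drawn as a simple
topological graph in which every pair of crossing edges is `2`-planarly connected, i.e.
`K_n` is a `2`-PCC graph. -/
theorem completeGraph_two_pcc (n : ℕ) :
    ∃ (E : Type) (G : TopoGraph (Fin n) E),
      G.toSimpleGraph = (⊤ : SimpleGraph (Fin n)) ∧ G.Simple ∧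
      ∀ e f : E, G.Crosses e f → G.KPlanarlyConnected 2 e f := by
  refine ⟨ArcDiagram.Edge n, ArcDiagram.drawing n, ArcDiagram.drawing_toSimpleGraph n,
    ArcDiagram.drawing_simple n, fun e f h => ?_⟩
  have he := ArcDiagram.src_ne_zero_of_crosses h
  have hf := ArcDiagram.src_ne_zero_of_crosses h.symm
  exact TopoGraph.kPlanarlyConnected_two_of_adj (mem_insert _ _) (mem_insert _ _)
    (ArcDiagram.drawing_planarSubgraph_adj_zero he).symm
    (ArcDiagram.drawing_planarSubgraph_adj_zero hf)
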